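/- Let β=(β_n)_{n∈ℕ} be a Cantor base with x_β<+∞. Then Fac(D'_β)=Fac(Δ'_β)=Fac(Σ'_β), where Fac(L) denotes the set of finite factors (contiguous finite subwords) of the infinite words in L. -/

import Mathlib

open Filter Topology

/-- A Cantor real base: a sequence of reals `> 1` whose infinite product diverges to `+∞`. -/
structure IsCantorBase (β : ℕ → ℝ) : Prop where
  one_lt : ∀ n, 1 < β n
  prod_tendsto : Tendsto (fun N => ∏ i ∈ Finset.range N, β i) atTop atTop

/-- The product `β_0 ⋯ β_n`. -/
noncomputable def prodUpTo (β : ℕ → ℝ) (n : ℕ) : ℝ := ∏ i ∈ Finset.range (n + 1), β i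

/-- The shifted base `β^(n) = (β_n, β_{n+1}, …)`. -/
def shiftBase (β : ℕ → ℝ) (n : ℕ) : ℕ → ℝ := fun m => β (n + m)

/-- `x_β = Σ_{n} (⌈β_n⌉ - 1)/(β_0 ⋯ β_n)`. -/
noncomputable def xB (β : ℕ → ℝ) : ℝ := ∑' n, ((⌈β n⌉ : ℝ) - 1) / prodUpTo β n

/-- The condition `x_β < +∞`, i.e. the series defining `x_β` converges. -/
def XBSummable (β : ℕ → ℝ) : Prop :=
  Summable (fun n => ((⌈β n⌉ : ℝ) - 1) / prodUpTo β n)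

/-- `val_β(a) = Σ_n a_n/(β_0 ⋯ β_n)`. -/
noncomputable def valB (β : ℕ → ℝ) (a : ℕ → ℤ) : ℝ := ∑' n, (a n : ℝ) / prodUpTo β n

/-- The digit condition `a_n ∈ [[0, ⌈β_n⌉ - 1]]` for all `n`. -/
def validWord (β : ℕ → ℝ) (a : ℕ → ℤ) : Prop := ∀ n, 0 ≤ a n ∧ a n ≤ ⌈β n⌉ - 1

/-- The flip map `θ_β`. -/
noncomputable def theta (β : ℕ → ℝ) (a : ℕ → ℤ) : ℕ → ℤ := fun n => ⌈β n⌉ - 1 - a n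

/-- The greedy remainders `r_{β,n}(x)`. -/
noncomputable def greedyR (β : ℕ → ℝ) (x : ℝ) : ℕ → ℝ
  | 0 => β 0 * x - (⌊β 0 * x⌋ : ℝ)
  | n + 1 => β (n + 1) * greedyR β x n - (⌊β (n + 1) * greedyR β x n⌋ : ℝ)

/-- The greedy digits `ε_{β,n}(x)`; `greedyDigit β x` is the greedy β-expansion `d_β(x)`. -/
noncomputable def greedyDigit (β : ℕ → ℝ) (x : ℝ) : ℕ → ℤ
  | 0 => ⌊β 0 * x⌋
  | n + 1 => ⌊β (n + 1) * greedyR β x n⌋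

/-- The lazy remainders `s_{β,n}(x)`. -/
noncomputable def lazyS (β : ℕ → ℝ) (x : ℝ) : ℕ → ℝ
  | 0 => β 0 * x - (⌈β 0 * x - xB (shiftBase β 1)⌉ : ℝ)
  | n + 1 => β (n + 1) * lazyS β x n -
      (⌈β (n + 1) * lazyS β x n - xB (shiftBase β (n + 2))⌉ : ℝ)

/-- The lazy digits `ξ_{β,n}(x)`; `lazyDigit β x` is the lazy β-expansion `ℓ_β(x)`. -/
noncomputable def lazyDigit (β : ℕ → ℝ) (x : ℝ) : ℕ → ℤ
  | 0 => ⌈β 0 * x - xB (shiftBase β 1)⌉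
  | n + 1 => ⌈β (n + 1) * lazyS β x n - xB (shiftBase β (n + 2))⌉

/-- Strict lexicographic order on infinite words. -/
def lexLt (a b : ℕ → ℤ) : Prop := ∃ k, (∀ i < k, a i = b i) ∧ a k < b k

/-- Lexicographic order on infinite words. -/
def lexLe (a b : ℕ → ℤ) : Prop := lexLt a b ∨ a = b

/-- `D_β`, the set of greedy β-expansions of points of `[0,1)`. -/
def greedySet (β : ℕ → ℝ) : Set (ℕ → ℤ) :=
  {a | ∃ x ∈ Set.Ico (0 : ℝ) 1, a = greedyDigit β x}

/-- `D'_β`, the set of lazy β-expansions of points of `(x_β - 1, x_β]`. -/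
def lazySet (β : ℕ → ℝ) : Set (ℕ → ℤ) :=
  {a | ∃ x ∈ Set.Ioc (xB β - 1) (xB β), a = lazyDigit β x}

/-- `Δ'_β = ⋃_n D'_{β^(n)}`. -/
def deltaSet (β : ℕ → ℝ) : Set (ℕ → ℤ) := ⋃ n, lazySet (shiftBase β n)

/-- The set of finite factors of the infinite words in `L`. -/
def Fac (L : Set (ℕ → ℤ)) : Set (List ℤ) :=
  {w | ∃ a ∈ L, ∃ k : ℕ, ∀ i : Fin w.length, w.get i = a (k + i)}

/-!
Prepending the maximal digit `⌈β_0⌉ - 1` to a lazy expansion corresponds to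
`y ↦ (⌈β_0⌉ - 1 + y) / β_0`, which maps the lazy interval `(x_{β^(1)} - 1, x_{β^(1)}]` into
`(x_β - 1, x_β]` and is inverted by the first lazy remainder. Iterating, every word of
`D'_{β^(n)}` is a suffix of a word of `D'_β`, so `Δ'_β` has no new factors. Taking the closure adds
none either, because the words having a given factor at a given position form an open cylinder.
-/

open Set

theorem Fac_mono {L L' : Set (ℕ → ℤ)} (h : L ⊆ L') : Fac L ⊆ Fac L' := by
  rintro w ⟨a, ha, k, hw⟩
  exact ⟨a, h ha, k, hw⟩

theorem Fac_iUnion {ι : Sort*} (L : ι → Set (ℕ → ℤ)) : Fac (⋃ i, L i) = ⋃ i, Fac (L i) := by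
  ext w
  simp only [Fac, mem_iUnion, mem_ofPred_eq]
  exact ⟨fun ⟨a, ⟨i, ha⟩, hw⟩ => ⟨i, a, ha, hw⟩, fun ⟨i, a, ha, hw⟩ => ⟨a, ⟨i, ha⟩, hw⟩⟩

theorem Fac_subset_of_forall_tail {L L' : Set (ℕ → ℤ)}
    (h : ∀ b ∈ L', ∃ a ∈ L, ∀ k, a (k + 1) = b k) : Fac L' ⊆ Fac L := by
  rintro w ⟨b, hb, k, hw⟩
  obtain ⟨a, ha, hab⟩ := h b hb
  refine ⟨a, ha, k + 1, fun i => ?_⟩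
  rw [hw i, ← hab, add_right_comm]

theorem isOpen_setOf_factor_at (w : List ℤ) (k : ℕ) :
    IsOpen {a : ℕ → ℤ | ∀ i : Fin w.length, w.get i = a (k + i)} := by
  have h : {a : ℕ → ℤ | ∀ i : Fin w.length, w.get i = a (k + i)} =
      ⋂ i : Fin w.length, (fun a : ℕ → ℤ => a (k + i)) ⁻¹' {w.get i} := by
    ext a
    simp [eq_comm]
  rw [h]
  exact isOpen_iInter_of_finite fun i => (isOpen_discrete _).preimage (continuous_apply _)

theorem Fac_closure (L : Set (ℕ → ℤ)) : Fac (closure L) = Fac L := by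
  refine Subset.antisymm ?_ (Fac_mono subset_closure)
  rintro w ⟨a, ha, k, hw⟩
  obtain ⟨b, hb, hbL⟩ := mem_closure_iff.mp ha _ (isOpen_setOf_factor_at w k) hw
  exact ⟨b, hbL, k, hb⟩

theorem shiftBase_zero (β : ℕ → ℝ) : shiftBase β 0 = β := by
  funext n
  simp [shiftBase]

theorem shiftBase_shiftBase (β : ℕ → ℝ) (m n : ℕ) :
    shiftBase (shiftBase β m) n = shiftBase β (m + n) := by
  funext k
  simp [shiftBase, add_assoc]

theorem prodUpTo_succ (β : ℕ → ℝ) (n : ℕ) :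
    prodUpTo β (n + 1) = β 0 * prodUpTo (shiftBase β 1) n := by
  simp only [prodUpTo, shiftBase]
  rw [Finset.prod_range_succ', mul_comm]
  simp only [add_comm 1]

theorem xB_summand_succ (β : ℕ → ℝ) (n : ℕ) :
    ((⌈β (n + 1)⌉ : ℝ) - 1) / prodUpTo β (n + 1) =
      ((⌈shiftBase β 1 n⌉ : ℝ) - 1) / prodUpTo (shiftBase β 1) n / β 0 := by
  rw [prodUpTo_succ, div_div, mul_comm (prodUpTo _ n)]
  simp [shiftBase, add_comm 1 n]

theorem XBSummable.shiftBase_one {β : ℕ → ℝ} (hβ : ∀ n, 1 < β n) (hx : XBSummable β) :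
    XBSummable (shiftBase β 1) := by
  have h := ((summable_nat_add_iff 1).2 hx).mul_left (β 0)
  refine h.congr fun n => ?_
  rw [xB_summand_succ, mul_div_cancel₀ _ (by linarith [hβ 0])]

theorem xB_eq_div (β : ℕ → ℝ) (hx : XBSummable β) :
    xB β = ((⌈β 0⌉ : ℝ) - 1 + xB (shiftBase β 1)) / β 0 := by
  rw [xB, hx.tsum_eq_zero_add, tsum_congr (xB_summand_succ β), tsum_div_const, add_div]
  simp [prodUpTo, xB]

theorem lazyS_succ (β : ℕ → ℝ) (x : ℝ) (k : ℕ) :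
    lazyS β x (k + 1) = lazyS (shiftBase β 1) (lazyS β x 0) k := by
  induction k with
  | zero => simp only [lazyS, shiftBase_shiftBase]; rfl
  | succ k ih =>
    rw [lazyS.eq_2 β x (k + 1), lazyS.eq_2 (shiftBase β 1) _ k, ← ih, shiftBase_shiftBase]
    simp only [shiftBase, add_comm 1, add_assoc]

theorem lazyDigit_succ (β : ℕ → ℝ) (x : ℝ) (k : ℕ) :
    lazyDigit β x (k + 1) = lazyDigit (shiftBase β 1) (lazyS β x 0) k := by
  cases k with
  | zero => simp only [lazyDigit, shiftBase_shiftBase]; rfl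
  | succ k =>
    rw [lazyDigit.eq_2, lazyDigit.eq_2, ← lazyS_succ, shiftBase_shiftBase]
    simp only [shiftBase, add_comm 1, add_assoc]

theorem exists_lazyS_zero_eq {β : ℕ → ℝ} (hβ : ∀ n, 1 < β n) (hx : XBSummable β) {y : ℝ}
    (hy : y ∈ Ioc (xB (shiftBase β 1) - 1) (xB (shiftBase β 1))) :
    ∃ x ∈ Ioc (xB β - 1) (xB β), lazyS β x 0 = y := by
  set c : ℤ := ⌈β 0⌉ - 1
  have hβ0 : 0 < β 0 := by linarith [hβ 0]
  have hmul : β 0 * ((c + y) / β 0) = c + y := mul_div_cancel₀ _ hβ0.ne'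
  have hdigit : ⌈β 0 * ((c + y) / β 0) - xB (shiftBase β 1)⌉ = c := by
    rw [hmul, add_sub_assoc, add_comm, Int.ceil_add_intCast, add_eq_right, Int.ceil_eq_zero_iff]
    constructor <;> linarith [hy.1, hy.2]
  have hxB : xB β = (c + xB (shiftBase β 1)) / β 0 := by
    rw [xB_eq_div β hx]
    push_cast [c]
    ring
  refine ⟨(c + y) / β 0, ⟨?_, ?_⟩, ?_⟩
  · rw [hxB, lt_div_iff₀ hβ0, sub_mul, div_mul_cancel₀ _ hβ0.ne']
    linarith [hy.1, hβ 0]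
  · rw [hxB]
    gcongr
    exact hy.2
  · rw [lazyS, hdigit, hmul]
    ring

theorem exists_lazySet_tail_eq {β : ℕ → ℝ} (hβ : ∀ n, 1 < β n) (hx : XBSummable β) :
    ∀ b ∈ lazySet (shiftBase β 1), ∃ a ∈ lazySet β, ∀ k, a (k + 1) = b k := by
  rintro _ ⟨y, hy, rfl⟩
  obtain ⟨x, hxI, hxy⟩ := exists_lazyS_zero_eq hβ hx hy
  exact ⟨lazyDigit β x, ⟨x, hxI, rfl⟩, fun k => by rw [lazyDigit_succ, hxy]⟩

theorem Fac_lazySet_shiftBase_subset {β : ℕ → ℝ} (hβ : ∀ n, 1 < β n) (hx : XBSummable β)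
    (m : ℕ) : Fac (lazySet (shiftBase β m)) ⊆ Fac (lazySet β) := by
  induction m generalizing β with
  | zero => rw [shiftBase_zero]
  | succ m ih =>
    rw [add_comm, ← shiftBase_shiftBase]
    exact (ih (fun n => hβ _) (hx.shiftBase_one hβ)).trans
      (Fac_subset_of_forall_tail (exists_lazySet_tail_eq hβ hx))

/-- `Fac(D'_β) = Fac(Δ'_β) = Fac(Σ'_β)`. -/
theorem fac_eq (β : ℕ → ℝ) (hβ : IsCantorBase β) (hx : XBSummable β) :
    Fac (lazySet β) = Fac (deltaSet β) ∧ Fac (deltaSet β) = Fac (closure (deltaSet β)) := by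
  refine ⟨(Fac_mono ?_).antisymm ?_, (Fac_closure _).symm⟩
  · exact subset_iUnion_of_subset 0 (by rw [shiftBase_zero])
  · rw [deltaSet, Fac_iUnion]
    exact iUnion_subset fun n => Fac_lazySet_shiftBase_subset hβ.one_lt hx n
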